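/- Let $K$ be a field, $P = K[x_1,\dots,x_n]$, and $I$ a zero-dimensional ideal such that for each $i = 1, \dots, n$ the ideal $I$ contains a squarefree polynomial $g_i(x_i) \in K[x_i]$ with $\gcd(g_i, g_i') = 1$. Then $I$ is a radical ideal. (Seidenberg's Lemma.) -/

import Mathlib

/-!
Each generator `xᵢ` of `B = K[x₁, …, xₙ] / I` is a root of `gᵢ`, and `gᵢ'(xᵢ)` is a unit in `B`
because `gᵢ` and `gᵢ'` are coprime. Differentiating `gᵢ(xᵢ) = 0` gives `gᵢ'(xᵢ) dxᵢ = 0`, so every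
`dxᵢ` vanishes and `Ω[B⁄K] = 0`: the algebra `B` is formally unramified over `K`. A formally
unramified algebra of finite type over a field is reduced, i.e. `I` is radical.
-/

open Polynomial

theorem Derivation.map_eq_zero_of_separable_of_aeval_eq_zero {R A M : Type*} [CommRing R]
    [CommRing A] [Algebra R A] [AddCommGroup M] [Module A M] [Module R M] [IsScalarTower R A M]
    (D : Derivation R A M) {p : R[X]} (hp : p.Separable) {a : A} (ha : aeval a p = 0) :
    D a = 0 := by
  obtain ⟨u, v, huv⟩ := hp
  have hunit : aeval a v * aeval a (derivative p) = 1 := by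
    simpa [ha] using congrArg (aeval a) huv
  calc D a = (aeval a v * aeval a (derivative p)) • D a := by rw [hunit, one_smul]
    _ = aeval a v • D (aeval a p) := by rw [map_aeval, mul_smul]
    _ = 0 := by rw [ha, map_zero, smul_zero]

theorem Algebra.FormallyUnramified.of_adjoin_eq_top_of_separable {R A : Type*} [CommRing R]
    [CommRing A] [Algebra R A] (s : Set A) (hs : Algebra.adjoin R s = ⊤)
    (hsep : ∀ a ∈ s, ∃ p : R[X], p.Separable ∧ aeval a p = 0) :
    Algebra.FormallyUnramified R A := by
  have hD : KaehlerDifferential.D R A = 0 := by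
    refine Derivation.ext_of_adjoin_eq_top s hs fun a ha ↦ ?_
    obtain ⟨p, hp, hpa⟩ := hsep a ha
    exact (KaehlerDifferential.D R A).map_eq_zero_of_separable_of_aeval_eq_zero hp hpa
  suffices (⊤ : Submodule A Ω[A⁄R]) ≤ ⊥ from
    ⟨(subsingleton_iff_forall_eq 0).mpr fun ω ↦ this trivial⟩
  rw [← KaehlerDifferential.span_range_derivation, Submodule.span_le]
  rintro _ ⟨a, rfl⟩
  simp [hD]

theorem Ideal.Quotient.adjoin_range_mkₐ_X {K σ : Type*} [CommRing K]
    (I : Ideal (MvPolynomial σ K)) :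
    Algebra.adjoin K (Set.range fun i ↦ Ideal.Quotient.mkₐ K I (MvPolynomial.X i)) = ⊤ := by
  rw [Set.range_comp' (Ideal.Quotient.mkₐ K I) MvPolynomial.X, ← AlgHom.map_adjoin,
    MvPolynomial.adjoin_range_X, Algebra.map_top, AlgHom.range_eq_top]
  exact Ideal.Quotient.mkₐ_surjective K I

theorem stmt10_general {K : Type*} [Field K] {n : ℕ} (I : Ideal (MvPolynomial (Fin n) K))
    (g : Fin n → Polynomial K)
    (hmem : ∀ i, Polynomial.aeval (MvPolynomial.X i : MvPolynomial (Fin n) K) (g i) ∈ I)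
    (hcop : ∀ i, IsCoprime (g i) (Polynomial.derivative (g i))) :
    I.IsRadical := by
  rw [Ideal.isRadical_iff_quotient_reduced]
  have : Algebra.FormallyUnramified K (MvPolynomial (Fin n) K ⧸ I) := by
    refine .of_adjoin_eq_top_of_separable _ (Ideal.Quotient.adjoin_range_mkₐ_X I) ?_
    rintro _ ⟨i, rfl⟩
    refine ⟨g i, hcop i, ?_⟩
    rw [aeval_algHom_apply, Ideal.Quotient.mkₐ_eq_mk, Ideal.Quotient.eq_zero_iff_mem]
    exact hmem i
  exact Algebra.FormallyUnramified.isReduced_of_field K _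

theorem stmt10 {K : Type*} [Field K] {n : ℕ} (I : Ideal (MvPolynomial (Fin n) K))
    [FiniteDimensional K (MvPolynomial (Fin n) K ⧸ I)]
    (g : Fin n → Polynomial K)
    (hmem : ∀ i, Polynomial.aeval (MvPolynomial.X i : MvPolynomial (Fin n) K) (g i) ∈ I)
    (hsq : ∀ i, Squarefree (g i))
    (hcop : ∀ i, IsCoprime (g i) (Polynomial.derivative (g i))) :
    I.IsRadical :=
  stmt10_general I g hmem hcop
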